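/- arXiv:math/0209295 — 2 statements merged into one kernel-verified Lean document; each statement's English description precedes it below -/
import Mathlib

section
/- Let 0 < α < 1, 0 < β < 1 and α + β ≥ 1, and let φ ∈ S_α^β(1). Then the Laplace transform L(φ)(z) := ∫_ℝ e^{−zt} φ(t) dt (the integral converges absolutely for every z ∈ ℂ) defines an entire function belonging to J*S_β^α, i.e. there exist constants C > 0 and a > 0, b > 0 such that |L(φ)(x+iy)| ≤ C·exp(−a|y|^{1/β} + b|x|^{1/(1−α)}) for all x, y ∈ ℝ. -/
/-!
The integrand `e^{-zt} φ(t)` is dominated by `exp (K |Re z|^{1/(1-α)} - (a/2) |t|^{1/α})`, by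
Young's inequality for the conjugate exponents `1/α` and `1/(1-α)`; this gives absolute
convergence and, differentiating under the integral sign, holomorphy. For the decay in
`y = Im z`, Cauchy's theorem moves the integral to the line `Im t = s` (the vertical sides of the
rectangles vanish by the decay of `φ` in horizontal strips). There `|e^{-zt}|` contributes
`e^{ys}` and `φ` contributes at most `e^{b|s|^{1/(1-β)}}`; choosing `s` of sign opposite to `y`
and of the optimal size makes `ys + b|s|^{1/(1-β)} = -k|y|^{1/β}`.
-/

open Complex MeasureTheory

noncomputable section

/-- One-dimensional Gelfand–Shilov space `S_α^β(1)`. -/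
def GelfandShilov1 (α β : ℝ) (φ : ℂ → ℂ) : Prop :=
  Differentiable ℂ φ ∧
  ∃ C : ℝ, 0 < C ∧ ∃ a : ℝ, 0 < a ∧ ∃ b : ℝ, 0 < b ∧
    ∀ x y : ℝ,
      ‖φ ((x : ℂ) + (y : ℂ) * Complex.I)‖ ≤
        C * Real.exp (-a * |x| ^ (1 / α) + b * |y| ^ (1 / (1 - β)))

/-- The Laplace transform `L(φ)(z) = ∫ℝ e^{-zt} φ(t) dt`. -/
def LaplaceT (φ : ℂ → ℂ) (z : ℂ) : ℂ :=
  ∫ t : ℝ, Complex.exp (-z * (t : ℂ)) * φ (t : ℂ)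

open Filter Topology Set

lemma exists_mul_sub_mul_rpow_le {c p p' : ℝ} (hc : 0 < c) (hp : p.HolderConjugate p') :
    ∃ K > 0, ∀ R u : ℝ, 0 ≤ R → 0 ≤ u → R * u - c * u ^ p ≤ K * R ^ p' - c / 2 * u ^ p := by
  have := hp.pos
  have := hp.symm.pos
  -- Young's inequality for `(ε * u) * (R / ε)`, with `ε ^ p / p = c / 2`
  set ε := (p * c / 2) ^ p⁻¹
  have hε : 0 < ε := by positivity
  have hεp : ε ^ p = p * c / 2 := Real.rpow_inv_rpow (by positivity) hp.ne_zero
  refine ⟨(ε ^ p' * p')⁻¹, by positivity, fun R u hR hu => ?_⟩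
  have young := Real.young_inequality_of_nonneg (mul_nonneg hε.le hu) (div_nonneg hR hε.le) hp
  rw [Real.mul_rpow hε.le hu, hεp, Real.div_rpow hR hε.le] at young
  have : ε * u * (R / ε) = R * u := by field_simp
  have : p * c / 2 * u ^ p / p = c / 2 * u ^ p := by field_simp
  have : R ^ p' / ε ^ p' / p' = (ε ^ p' * p')⁻¹ * R ^ p' := by field_simp
  linarith

lemma exists_mul_add_mul_abs_rpow_eq {b q q' : ℝ} (hb : 0 < b) (hq : q.HolderConjugate q') :
    ∃ k > 0, ∀ y : ℝ, ∃ s : ℝ, y * s + b * |s| ^ q = -k * |y| ^ q' := by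
  refine ⟨b / (2 * b) ^ q', by positivity, fun y => ?_⟩
  set t := |y| / (2 * b)
  have ht : 0 ≤ t := by positivity
  have hy : |y| = 2 * b * t := by simp only [t]; field_simp
  -- `s₀ = t ^ (q' - 1)` minimises `b s^q - |y| s` over `s ≥ 0`
  set s₀ := t ^ (q' - 1)
  have hs₀ : 0 ≤ s₀ := by positivity
  have key : b * s₀ ^ q - |y| * s₀ = -(b / (2 * b) ^ q') * |y| ^ q' := by
    have : t * s₀ = t ^ q' := by
      rw [mul_comm, ← Real.rpow_add_one' ht (by simp [hq.symm.ne_zero]), sub_add_cancel]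
    rw [← Real.rpow_mul ht, hq.symm.sub_one_mul_conj, hy, Real.mul_rpow (by positivity) ht,
      mul_assoc, this]
    field_simp
    ring
  rcases le_total 0 y with h | h
  · refine ⟨-s₀, ?_⟩
    rw [abs_neg, abs_of_nonneg hs₀, ← key, abs_of_nonneg h]
    ring
  · refine ⟨s₀, ?_⟩
    rw [abs_of_nonneg hs₀, ← key, abs_of_nonpos h]
    ring

lemma integrable_abs_rpow_mul_exp_neg_mul_abs_rpow {s c p : ℝ} (hs : -1 < s) (hc : 0 < c)
    (hp : 0 < p) : Integrable fun t : ℝ => |t| ^ s * Real.exp (-c * |t| ^ p) := by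
  have := (integrable_fun_norm_addHaar (volume : Measure ℝ)
    (f := fun y : ℝ => y ^ s * Real.exp (-c * y ^ p))).2 ?_
  · simpa using this
  · simpa using integrableOn_rpow_mul_exp_neg_mul_rpow hs hp hc

lemma integrable_exp_neg_mul_abs_rpow {c p : ℝ} (hc : 0 < c) (hp : 0 < p) :
    Integrable fun t : ℝ => Real.exp (-c * |t| ^ p) := by
  simpa using integrable_abs_rpow_mul_exp_neg_mul_abs_rpow (s := 0) (by norm_num) hc hp

lemma tendsto_exp_neg_mul_abs_rpow_cocompact {c p : ℝ} (hc : 0 < c) (hp : 0 < p) :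
    Tendsto (fun t : ℝ => Real.exp (-c * |t| ^ p)) (cocompact ℝ) (𝓝 0) := by
  refine Real.tendsto_exp_atBot.comp ?_
  have := ((tendsto_rpow_atTop hp).comp (tendsto_norm_cocompact_atTop (E := ℝ))).const_mul_atTop
    hc
  simpa [Function.comp_def, neg_mul] using tendsto_neg_atTop_atBot.comp this

theorem integral_add_mul_I_eq_integral {E : Type*} [NormedAddCommGroup E] [NormedSpace ℂ E]
    [CompleteSpace E] {f : ℂ → E} (hf : Differentiable ℂ f) {s : ℝ} {g : ℝ → ℝ}
    (hg : Tendsto g (cocompact ℝ) (𝓝 0)) (hfg : ∀ u v : ℝ, |v| ≤ |s| → ‖f (u + v * I)‖ ≤ g u)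
    (hf₀ : Integrable fun t : ℝ => f t) (hfs : Integrable fun t : ℝ => f (t + s * I)) :
    ∫ t : ℝ, f (t + s * I) = ∫ t : ℝ, f t := by
  set V : ℝ → E := fun u => ∫ v in (0 : ℝ)..s, f (u + v * I)
  have hV : Tendsto V (cocompact ℝ) (𝓝 0) := by
    refine squeeze_zero_norm (fun u => ?_) (by simpa using hg.mul_const |s|)
    have := intervalIntegral.norm_integral_le_of_norm_le_const fun v (hv : v ∈ uIoc 0 s) =>
      hfg u v (by simpa using abs_sub_left_of_mem_uIcc (uIoc_subset_uIcc hv))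
    rwa [sub_zero] at this
  have hrect (T : ℝ) : (∫ t in -T..T, f t) - (∫ t in -T..T, f (t + s * I)) =
      I • V (-T) - I • V T := by
    have := integral_boundary_rect_eq_zero_of_differentiableOn f (-T) (T + s * I)
      hf.differentiableOn
    simp only [neg_re, neg_im, ofReal_re, ofReal_im, add_re, add_im, mul_re, mul_im, I_re, I_im,
      mul_zero, mul_one, sub_zero, zero_add, add_zero, neg_zero, ofReal_zero, zero_mul,
      ofReal_neg] at this
    rw [← sub_eq_zero, ← this]
    simp only [V, ofReal_neg]
    abel
  have hlim : Tendsto (fun T : ℝ => (∫ t in -T..T, f t) - ∫ t in -T..T, f (t + s * I)) atTop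
      (𝓝 0) := by
    simp_rw [hrect]
    have hV_atBot := hV.comp (tendsto_neg_atTop_atBot.mono_right atBot_le_cocompact)
    simpa using (hV_atBot.const_smul I).sub ((hV.mono_left atTop_le_cocompact).const_smul I)
  have := (intervalIntegral_tendsto_integral hf₀ tendsto_neg_atTop_atBot tendsto_id).sub
    (intervalIntegral_tendsto_integral hfs tendsto_neg_atTop_atBot tendsto_id)
  exact (sub_eq_zero.1 (tendsto_nhds_unique this hlim)).symm

section LaplaceT

variable {φ : ℂ → ℂ} {C a b p p' q K : ℝ}

lemma norm_cexp_neg_mul_mul_le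
    (hφ : ∀ x y : ℝ, ‖φ (x + y * I)‖ ≤ C * Real.exp (-a * |x| ^ p + b * |y| ^ q))
    (hK : ∀ R u : ℝ, 0 ≤ R → 0 ≤ u → R * u - a * u ^ p ≤ K * R ^ p' - a / 2 * u ^ p)
    {z : ℂ} {R : ℝ} (hR : |z.re| ≤ R) (ζ : ℂ) :
    ‖cexp (-z * ζ) * φ ζ‖ ≤ C * Real.exp (K * R ^ p' + (z.im * ζ.im + b * |ζ.im| ^ q)) *
      Real.exp (-(a / 2) * |ζ.re| ^ p) := by
  have hφζ := hφ ζ.re ζ.im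
  rw [re_add_im] at hφζ
  have hC : 0 ≤ C := nonneg_of_mul_nonneg_left ((norm_nonneg _).trans hφζ) (Real.exp_pos _)
  have hre : (-z * ζ).re = -(z.re * ζ.re) + z.im * ζ.im := by simp; ring
  have hYoung := hK R |ζ.re| ((abs_nonneg _).trans hR) (abs_nonneg _)
  have : -(z.re * ζ.re) ≤ R * |ζ.re| := calc
    -(z.re * ζ.re) ≤ |z.re| * |ζ.re| := abs_mul z.re ζ.re ▸ neg_le_abs _
    _ ≤ R * |ζ.re| := by gcongr
  calc ‖cexp (-z * ζ) * φ ζ‖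
      ≤ Real.exp (-(z.re * ζ.re) + z.im * ζ.im) *
          (C * Real.exp (-a * |ζ.re| ^ p + b * |ζ.im| ^ q)) := by
        rw [norm_mul, norm_exp, hre]; gcongr
    _ = C * Real.exp (-(z.re * ζ.re) - a * |ζ.re| ^ p + (z.im * ζ.im + b * |ζ.im| ^ q)) := by
        rw [mul_left_comm, ← Real.exp_add]; ring_nf
    _ ≤ C * Real.exp (K * R ^ p' - a / 2 * |ζ.re| ^ p + (z.im * ζ.im + b * |ζ.im| ^ q)) := by
        gcongr C * Real.exp (?_ + _); linarith
    _ = _ := by rw [mul_assoc, ← Real.exp_add]; ring_nf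

lemma integrable_cexp_neg_mul_mul (hφc : Continuous φ) (ha : 0 < a) (hp : 0 < p)
    (hφ : ∀ x y : ℝ, ‖φ (x + y * I)‖ ≤ C * Real.exp (-a * |x| ^ p + b * |y| ^ q))
    (hK : ∀ R u : ℝ, 0 ≤ R → 0 ≤ u → R * u - a * u ^ p ≤ K * R ^ p' - a / 2 * u ^ p)
    (z : ℂ) : Integrable fun t : ℝ => cexp (-z * t) * φ t := by
  refine ((integrable_exp_neg_mul_abs_rpow (half_pos ha) hp).const_mul
    (C * Real.exp (K * |z.re| ^ p' + (z.im * 0 + b * |0| ^ q)))).mono'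
      (by fun_prop) (.of_forall fun t => ?_)
  simpa only [ofReal_re, ofReal_im] using norm_cexp_neg_mul_mul_le hφ hK le_rfl t

lemma differentiable_laplaceT (hφc : Continuous φ) (ha : 0 < a) (hp : 0 < p)
    (hφ : ∀ x y : ℝ, ‖φ (x + y * I)‖ ≤ C * Real.exp (-a * |x| ^ p + b * |y| ^ q))
    (hK : ∀ R u : ℝ, 0 ≤ R → 0 ≤ u → R * u - a * u ^ p ≤ K * R ^ p' - a / 2 * u ^ p) :
    Differentiable ℂ (LaplaceT φ) := by
  intro z₀
  set M := C * Real.exp (K * (|z₀.re| + 1) ^ p' + b * |0| ^ q)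
  have hbound : ∀ z ∈ Metric.ball z₀ 1, ∀ t : ℝ,
      ‖cexp (-z * t) * (-t) * φ t‖ ≤ M * (|t| ^ (1 : ℝ) * Real.exp (-(a / 2) * |t| ^ p)) := by
    intro z hz t
    have hzre : |z.re| ≤ |z₀.re| + 1 := by
      have := abs_re_le_norm (z - z₀)
      rw [sub_re] at this
      linarith [abs_sub_abs_le_abs_sub z.re z₀.re, mem_ball_iff_norm.1 hz]
    have := norm_cexp_neg_mul_mul_le hφ hK hzre t
    simp only [ofReal_re, ofReal_im, mul_zero, zero_add] at this
    rw [mul_right_comm, norm_mul, norm_neg, norm_real, Real.norm_eq_abs, Real.rpow_one,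
      mul_left_comm, mul_comm]
    exact mul_le_mul_of_nonneg_left this (abs_nonneg t)
  have hF' := hasDerivAt_integral_of_dominated_loc_of_deriv_le (Metric.ball_mem_nhds z₀ one_pos)
    (.of_forall fun z => (integrable_cexp_neg_mul_mul hφc ha hp hφ hK z).aestronglyMeasurable)
    (integrable_cexp_neg_mul_mul hφc ha hp hφ hK z₀)
    (F' := fun z (t : ℝ) => cexp (-z * t) * (-t) * φ t) (by fun_prop)
    (.of_forall fun t z hz => hbound z hz t)
    ((integrable_abs_rpow_mul_exp_neg_mul_abs_rpow (by norm_num) (half_pos ha) hp).const_mul M)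
    (.of_forall fun t z _ => by
      simpa using ((hasDerivAt_neg z).mul_const (t : ℂ)).cexp.mul_const (φ t))
  exact hF'.2.differentiableAt

lemma exists_norm_laplaceT_le (hφd : Differentiable ℂ φ) (hC : 0 < C) (ha : 0 < a)
    (hp : 0 < p) (hb : 0 < b) (hq : q.HolderConjugate q') (hK₀ : 0 < K)
    (hφ : ∀ x y : ℝ, ‖φ (x + y * I)‖ ≤ C * Real.exp (-a * |x| ^ p + b * |y| ^ q))
    (hK : ∀ R u : ℝ, 0 ≤ R → 0 ≤ u → R * u - a * u ^ p ≤ K * R ^ p' - a / 2 * u ^ p) :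
    ∃ C' > 0, ∃ a' > 0, ∃ b' > 0, ∀ x y : ℝ,
      ‖LaplaceT φ (x + y * I)‖ ≤ C' * Real.exp (-a' * |y| ^ q' + b' * |x| ^ p') := by
  obtain ⟨k, hk, hopt⟩ := exists_mul_add_mul_abs_rpow_eq hb hq
  have hint := integrable_exp_neg_mul_abs_rpow (half_pos ha) hp
  refine ⟨C * ∫ t : ℝ, Real.exp (-(a / 2) * |t| ^ p), mul_pos hC (integral_exp_pos hint),
    k, hk, K, hK₀, fun x y => ?_⟩
  obtain ⟨s, hs⟩ := hopt y
  set z : ℂ := x + y * I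
  set f : ℂ → ℂ := fun ζ => cexp (-z * ζ) * φ ζ
  have hf (u v : ℝ) : ‖f (u + v * I)‖ ≤
      C * Real.exp (K * |x| ^ p' + (y * v + b * |v| ^ q)) * Real.exp (-(a / 2) * |u| ^ p) := by
    simpa [f, z] using
      norm_cexp_neg_mul_mul_le hφ hK (z := z) (R := |x|) (by simp [z]) (u + v * I)
  have hfd : Differentiable ℂ f := by fun_prop
  set M := C * Real.exp (K * |x| ^ p' + (|y| * |s| + b * |s| ^ q))
  have hstrip (u v : ℝ) (hv : |v| ≤ |s|) :
      ‖f (u + v * I)‖ ≤ M * Real.exp (-(a / 2) * |u| ^ p) := by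
    refine (hf u v).trans ?_
    have : y * v ≤ |y| * |s| := (le_abs_self _).trans (abs_mul y v ▸ by gcongr)
    have := hq.nonneg
    simp only [M]
    gcongr
  have hdecay :
      Tendsto (fun u : ℝ => M * Real.exp (-(a / 2) * |u| ^ p)) (cocompact ℝ) (𝓝 0) := by
    simpa using (tendsto_exp_neg_mul_abs_rpow_cocompact (half_pos ha) hp).const_mul M
  have hshift : ∫ t : ℝ, f (t + s * I) = LaplaceT φ z :=
    integral_add_mul_I_eq_integral hfd hdecay hstrip
      (integrable_cexp_neg_mul_mul hφd.continuous ha hp hφ hK z)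
      ((hint.const_mul _).mono' (hfd.continuous.comp (by fun_prop)).aestronglyMeasurable
        (.of_forall fun t => hf t s))
  calc ‖LaplaceT φ z‖
      ≤ ∫ t : ℝ, C * Real.exp (K * |x| ^ p' + (y * s + b * |s| ^ q)) *
          Real.exp (-(a / 2) * |t| ^ p) := by
        rw [← hshift]
        exact norm_integral_le_of_norm_le (hint.const_mul _) (.of_forall fun t => hf t s)
    _ = _ := by
        rw [integral_const_mul, hs, mul_right_comm]
        ring_nf

end LaplaceT

theorem laplace_mem_JstarS_general
    (α β : ℝ) (hα : 0 < α ∧ α < 1) (hβ : 0 < β ∧ β < 1)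
    (φ : ℂ → ℂ) (hφ : GelfandShilov1 α β φ) :
    (∀ z : ℂ, Integrable (fun t : ℝ => Complex.exp (-z * (t : ℂ)) * φ (t : ℂ))) ∧
    Differentiable ℂ (LaplaceT φ) ∧
    ∃ C : ℝ, 0 < C ∧ ∃ a : ℝ, 0 < a ∧ ∃ b : ℝ, 0 < b ∧
      ∀ x y : ℝ,
        ‖LaplaceT φ ((x : ℂ) + (y : ℂ) * Complex.I)‖ ≤
          C * Real.exp (-a * |y| ^ (1 / β) + b * |x| ^ (1 / (1 - α))) := by
  obtain ⟨hφd, C, hC, a, ha, b, hb, hφ⟩ := hφ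
  have hp : (1 / α).HolderConjugate (1 / (1 - α)) :=
    Real.holderConjugate_one_div hα.1 (sub_pos.2 hα.2) (add_sub_cancel _ _)
  have hq : (1 / (1 - β)).HolderConjugate (1 / β) :=
    Real.holderConjugate_one_div (sub_pos.2 hβ.2) hβ.1 (sub_add_cancel _ _)
  obtain ⟨K, hK₀, hK⟩ := exists_mul_sub_mul_rpow_le ha hp
  exact ⟨integrable_cexp_neg_mul_mul hφd.continuous ha hp.pos hφ hK,
    differentiable_laplaceT hφd.continuous ha hp.pos hφ hK,
    exists_norm_laplaceT_le hφd hC ha hp.pos hb hq hK₀ hφ hK⟩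

theorem laplace_mem_JstarS
    (α β : ℝ) (hα : 0 < α ∧ α < 1) (hβ : 0 < β ∧ β < 1) (hαβ : 1 ≤ α + β)
    (φ : ℂ → ℂ) (hφ : GelfandShilov1 α β φ) :
    (∀ z : ℂ, Integrable (fun t : ℝ => Complex.exp (-z * (t : ℂ)) * φ (t : ℂ))) ∧
    Differentiable ℂ (LaplaceT φ) ∧
    ∃ C : ℝ, 0 < C ∧ ∃ a : ℝ, 0 < a ∧ ∃ b : ℝ, 0 < b ∧
      ∀ x y : ℝ,
        ‖LaplaceT φ ((x : ℂ) + (y : ℂ) * Complex.I)‖ ≤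
          C * Real.exp (-a * |y| ^ (1 / β) + b * |x| ^ (1 / (1 - α))) :=
  laplace_mem_JstarS_general α β hα hβ φ hφ
end
end

section
/- Let α, β ∈ (0,1), let F : ℂ → ℂ be entire with constants C, a, b > 0 such that |F(x+iy)| ≤ C·exp(−a|y|^{1/β} + b|x|^{1/(1−α)}) for all x, y ∈ ℝ, and let ψ denote the inverse of the bijection z ↦ sinh(iz) from the strip {|Re z| < π/2} onto Ω := ℂ \ ({it : t ≥ 1} ∪ {−it : t ≥ 1}). Then for every compact set K ⊂ (0,∞) (so that K + iℝ ⊂ Ω), the integral ∫_K ∫_ℝ |F(ψ(ξ + iη))| dη dξ is finite; the same holds for every compact K ⊂ (−∞,0). -/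
open Complex MeasureTheory

noncomputable section

/-- The slit plane `Ω = ℂ \ ({it : t ≥ 1} ∪ {-it : t ≥ 1})`. -/
def slitPlane' : Set ℂ :=
  {w : ℂ | ¬ ∃ t : ℝ, 1 ≤ t ∧ (w = Complex.I * (t : ℂ) ∨ w = -(Complex.I * (t : ℂ)))}

/-! If `sinh (i z) = ξ + iη` then `η = sin (Re z) · cosh (Im z)`, so `log |η| ≤ |Im z|`. Since
`ψ` takes values in the strip `|Re z| < π/2`, the growth bound on `F` gives
`‖F (ψ (ξ + iη))‖ ≲ exp (-a (log |η|) ^ (1/β))`, and because `1/β > 1` this decays faster than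
`η⁻²`, hence is integrable in `η` uniformly in `ξ`. Measurability of `F ∘ ψ` comes from
Lusin–Souslin: `ψ` inverts a continuous injection, so its preimages of Borel sets are injective
continuous images of Borel sets. -/

open Set

lemma mem_slitPlane'_of_re_ne_zero {w : ℂ} (hw : w.re ≠ 0) : w ∈ slitPlane' := by
  rintro ⟨t, -, rfl | rfl⟩ <;> simp at hw

theorem Set.InvOn.measurable_indicator {α β : Type*} [TopologicalSpace α] [PolishSpace α]
    [MeasurableSpace α] [BorelSpace α] [Zero α] [TopologicalSpace β] [T2Space β]
    [MeasurableSpace β] [OpensMeasurableSpace β] {f : α → β} {g : β → α}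
    {s : Set α} {t : Set β}
    (hs : MeasurableSet s) (ht : MeasurableSet t) (hf : ContinuousOn f s)
    (hinv : InvOn g f s t) (hg : MapsTo g t s) : Measurable (t.indicator g) := by
  intro u hu
  have hpre : g ⁻¹' u ∩ t = f '' (s ∩ u) ∩ t := by
    ext w
    constructor
    · rintro ⟨hwu, hw⟩
      exact ⟨⟨g w, ⟨hg hw, hwu⟩, hinv.2 hw⟩, hw⟩
    · rintro ⟨⟨z, ⟨hz, hzu⟩, rfl⟩, hw⟩
      exact ⟨by rwa [mem_preimage, hinv.1 hz], hw⟩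
  have himage : MeasurableSet (f '' (s ∩ u)) :=
    (hs.inter hu).image_of_continuousOn_injOn (hf.mono inter_subset_left)
      (hinv.1.injOn.mono inter_subset_left)
  rw [indicator_preimage, Set.ite, hpre]
  exact (himage.inter ht).union ((measurable_const hu).diff ht)

lemma log_max_abs_im_sinh_I_mul_le (z : ℂ) :
    Real.log (max |(sinh (I * z)).im| 1) ≤ |z.im| := by
  have him : (sinh (I * z)).im = Real.sin z.re * Real.cosh z.im := by
    rw [mul_comm, sinh_mul_I, mul_I_im, ← re_add_im z, sin_add_mul_I, ← ofReal_sin,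
      ← ofReal_cosh, ← ofReal_cos, ← ofReal_sinh]
    simp [-ofReal_sin]
  have hcosh : Real.cosh z.im ≤ Real.exp |z.im| := by
    rw [← Real.cosh_abs, Real.cosh_eq]
    linarith [Real.exp_le_exp.2 (neg_le_self (abs_nonneg z.im))]
  have habs : |(sinh (I * z)).im| ≤ Real.cosh z.im := by
    rw [him, abs_mul, abs_of_pos (Real.cosh_pos _)]
    exact mul_le_of_le_one_left (Real.cosh_pos _).le (Real.abs_sin_le_one _)
  rw [Real.log_le_iff_le_exp (by positivity)]
  exact max_le (habs.trans hcosh) (Real.one_le_exp (abs_nonneg _))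

lemma norm_le_of_abs_re_le {F : ℂ → ℂ} {C a b p q R : ℝ} (hC : 0 ≤ C) (ha : 0 ≤ a) (hb : 0 ≤ b)
    (hp : 0 ≤ p) (hq : 0 ≤ q)
    (hbound : ∀ x y : ℝ, ‖F (x + y * I)‖ ≤ C * Real.exp (-a * |y| ^ p + b * |x| ^ q))
    {z : ℂ} (hz : |z.re| ≤ R) :
    ‖F z‖ ≤ C * Real.exp (b * R ^ q) *
      Real.exp (-a * Real.log (max |(sinh (I * z)).im| 1) ^ p) := by
  set L := Real.log (max |(sinh (I * z)).im| 1)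
  have hL : 0 ≤ L := Real.log_nonneg (le_max_right _ _)
  have him : a * L ^ p ≤ a * |z.im| ^ p := by gcongr; exact log_max_abs_im_sinh_I_mul_le z
  have hre : b * |z.re| ^ q ≤ b * R ^ q := by gcongr
  calc ‖F z‖ = ‖F (z.re + z.im * I)‖ := by rw [re_add_im]
    _ ≤ C * Real.exp (-a * |z.im| ^ p + b * |z.re| ^ q) := hbound _ _
    _ ≤ C * Real.exp (-a * L ^ p + b * R ^ q) := by
        gcongr C * Real.exp ?_; linarith
    _ = C * Real.exp (b * R ^ q) * Real.exp (-a * L ^ p) := by rw [Real.exp_add]; ring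

lemma exists_two_mul_sub_mul_rpow_le {a p : ℝ} (ha : 0 < a) (hp : 1 < p) :
    ∃ c, ∀ s : ℝ, 0 ≤ s → 2 * s - a * s ^ p ≤ c := by
  set s₀ := (2 / a) ^ (p - 1)⁻¹
  refine ⟨2 * s₀, fun s hs => ?_⟩
  rcases le_or_gt s s₀ with h | h
  · have : 0 ≤ a * s ^ p := by positivity
    linarith
  · have hs₀ : 0 < s₀ := by positivity
    have hpow : 2 / a ≤ s ^ (p - 1) :=
      calc 2 / a = s₀ ^ (p - 1) := by
            rw [← Real.rpow_mul (by positivity), inv_mul_cancel₀ (by linarith), Real.rpow_one]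
        _ ≤ s ^ (p - 1) := by gcongr
    have : 2 * s ≤ a * s ^ p :=
      calc 2 * s = a * (2 / a) * s := by field_simp
        _ ≤ a * s ^ (p - 1) * s := by gcongr
        _ = a * s ^ p := by
            rw [mul_assoc, ← Real.rpow_add_one (by linarith)]; ring_nf
    linarith

lemma integrable_exp_neg_mul_log_max_abs_one_rpow {a p : ℝ} (ha : 0 < a) (hp : 1 < p) :
    Integrable fun η : ℝ => Real.exp (-a * Real.log (max |η| 1) ^ p) := by
  obtain ⟨c, hc⟩ := exists_two_mul_sub_mul_rpow_le ha hp
  refine (integrable_inv_one_add_sq.const_mul (2 * Real.exp c)).mono'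
    (by fun_prop : Measurable _).aestronglyMeasurable (ae_of_all _ fun η => ?_)
  set m := max |η| 1
  have hm : 1 ≤ m := le_max_right _ _
  have hs : 0 ≤ Real.log m := Real.log_nonneg hm
  have hsq : m ^ 2 = Real.exp (2 * Real.log m) := by
    rw [two_mul, Real.exp_add, Real.exp_log (by positivity)]; ring
  have hdecay : Real.exp (-a * Real.log m ^ p) * m ^ 2 ≤ Real.exp c := by
    rw [hsq, ← Real.exp_add]
    exact Real.exp_le_exp.2 (by linarith [hc _ hs])
  have hη : 1 + η ^ 2 ≤ 2 * m ^ 2 := by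
    have : |η| ≤ m := le_max_left _ _
    nlinarith [sq_abs η, abs_nonneg η]
  rw [Real.norm_of_nonneg (Real.exp_pos _).le, ← div_eq_mul_inv, le_div_iff₀ (by positivity)]
  nlinarith [Real.exp_pos (-a * Real.log m ^ p)]

lemma integrableOn_prod_univ_of_norm_le {α β E : Type*} [MeasurableSpace α]
    [MeasurableSpace β] [NormedAddCommGroup E] {μ : Measure α} {ν : Measure β}
    [SFinite μ] [SFinite ν] {K : Set α}
    (hKm : MeasurableSet K) (hK : μ K ≠ ⊤) {f : α × β → E} {g : β → ℝ} (hg : Integrable g ν)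
    (hf : AEStronglyMeasurable f ((μ.prod ν).restrict (K ×ˢ univ)))
    (hfg : ∀ x ∈ K, ∀ y, ‖f (x, y)‖ ≤ g y) :
    IntegrableOn f (K ×ˢ univ) (μ.prod ν) := by
  have : IsFiniteMeasure (μ.restrict K) := isFiniteMeasure_restrict.2 hK
  have hg' : Integrable (fun z : α × β => g z.2) ((μ.prod ν).restrict (K ×ˢ univ)) := by
    rw [← Measure.prod_restrict, Measure.restrict_univ]
    exact hg.comp_snd _
  exact hg'.mono' hf (ae_restrict_of_forall_mem (hKm.prod .univ) fun z hz => hfg _ hz.1 _)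

theorem integral_pullback_finite_general
    (α β : ℝ) (hα : 0 < α ∧ α < 1) (hβ : 0 < β ∧ β < 1)
    (F : ℂ → ℂ) (hF : Differentiable ℂ F)
    (C a b : ℝ) (hC : 0 < C) (ha : 0 < a) (hb : 0 < b)
    (hbound : ∀ x y : ℝ,
      ‖F ((x : ℂ) + (y : ℂ) * Complex.I)‖ ≤
        C * Real.exp (-a * |y| ^ (1 / β) + b * |x| ^ (1 / (1 - α))))
    (ψ : ℂ → ℂ)
    (hψinv : Set.InvOn ψ (fun z => Complex.sinh (Complex.I * z))
      {z : ℂ | |z.re| < Real.pi / 2} slitPlane')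
    (hψmaps : Set.MapsTo ψ slitPlane' {z : ℂ | |z.re| < Real.pi / 2}) :
    (∀ K : Set ℝ, IsCompact K → K ⊆ Set.Ioi (0 : ℝ) →
      IntegrableOn
        (fun p : ℝ × ℝ => ‖F (ψ ((p.1 : ℂ) + (p.2 : ℂ) * Complex.I))‖)
        (K ×ˢ (Set.univ : Set ℝ))) ∧
    (∀ K : Set ℝ, IsCompact K → K ⊆ Set.Iio (0 : ℝ) →
      IntegrableOn
        (fun p : ℝ × ℝ => ‖F (ψ ((p.1 : ℂ) + (p.2 : ℂ) * Complex.I))‖)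
        (K ×ˢ (Set.univ : Set ℝ))) := by
  set offAxis := {w : ℂ | w.re ≠ 0}
  have ht : offAxis ⊆ slitPlane' := fun w hw => mem_slitPlane'_of_re_ne_zero hw
  have hψt : Measurable (offAxis.indicator ψ) :=
    Set.InvOn.measurable_indicator
      (isOpen_lt (continuous_abs.comp continuous_re) continuous_const).measurableSet
      (isOpen_ne_fun continuous_re continuous_const).measurableSet (by fun_prop)
      ⟨hψinv.1, hψinv.2.mono ht⟩ (hψmaps.mono_left ht)
  have hdecay : ∀ w ∈ offAxis, ‖F (ψ w)‖ ≤ C * Real.exp (b * (Real.pi / 2) ^ (1 / (1 - α))) *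
      Real.exp (-a * Real.log (max |w.im| 1) ^ (1 / β)) := by
    intro w hw
    simpa only [hψinv.2 (ht hw)] using norm_le_of_abs_re_le hC.le ha.le hb.le
      (one_div_pos.2 hβ.1).le
      (one_div_nonneg.2 (sub_nonneg.2 hα.2.le)) hbound (hψmaps (ht hw)).le
  have hvertical : ∀ K : Set ℝ, IsCompact K → (∀ x ∈ K, x ≠ 0) → IntegrableOn
      (fun p : ℝ × ℝ => ‖F (ψ ((p.1 : ℂ) + (p.2 : ℂ) * Complex.I))‖) (K ×ˢ univ) := by
    intro K hK hK0
    have hKt : ∀ p ∈ K ×ˢ (univ : Set ℝ), (p.1 : ℂ) + p.2 * I ∈ offAxis := fun p hp => by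
      simpa [offAxis] using hK0 _ hp.1
    refine integrableOn_prod_univ_of_norm_le hK.measurableSet hK.measure_lt_top.ne
      ((integrable_exp_neg_mul_log_max_abs_one_rpow ha (one_lt_one_div hβ.1 hβ.2)).const_mul _)
      ?_ fun x hx y => by simpa using hdecay _ (hKt (x, y) ⟨hx, trivial⟩)
    have hline : Measurable fun p : ℝ × ℝ => (p.1 : ℂ) + p.2 * I := by fun_prop
    refine (hF.continuous.norm.measurable.comp (hψt.comp hline)).aestronglyMeasurable.congr
      ?_
    exact ae_restrict_of_forall_mem (hK.measurableSet.prod .univ) fun p hp => by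
      simp only [Function.comp_apply, indicator_of_mem (hKt p hp)]
  exact ⟨fun K hK hKpos => hvertical K hK fun x hx => (hKpos hx).ne',
    fun K hK hKneg => hvertical K hK fun x hx => (hKneg hx).ne⟩

theorem integral_pullback_finite
    (α β : ℝ) (hα : 0 < α ∧ α < 1) (hβ : 0 < β ∧ β < 1)
    (F : ℂ → ℂ) (hF : Differentiable ℂ F)
    (C a b : ℝ) (hC : 0 < C) (ha : 0 < a) (hb : 0 < b)
    (hbound : ∀ x y : ℝ,
      ‖F ((x : ℂ) + (y : ℂ) * Complex.I)‖ ≤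
        C * Real.exp (-a * |y| ^ (1 / β) + b * |x| ^ (1 / (1 - α))))
    (ψ : ℂ → ℂ)
    (hψinv : Set.InvOn ψ (fun z => Complex.sinh (Complex.I * z))
      {z : ℂ | |z.re| < Real.pi / 2} slitPlane')
    (hψmaps : Set.MapsTo ψ slitPlane' {z : ℂ | |z.re| < Real.pi / 2})
    (hmaps : Set.MapsTo (fun z => Complex.sinh (Complex.I * z))
      {z : ℂ | |z.re| < Real.pi / 2} slitPlane') :
    (∀ K : Set ℝ, IsCompact K → K ⊆ Set.Ioi (0 : ℝ) →
      IntegrableOn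
        (fun p : ℝ × ℝ => ‖F (ψ ((p.1 : ℂ) + (p.2 : ℂ) * Complex.I))‖)
        (K ×ˢ (Set.univ : Set ℝ))) ∧
    (∀ K : Set ℝ, IsCompact K → K ⊆ Set.Iio (0 : ℝ) →
      IntegrableOn
        (fun p : ℝ × ℝ => ‖F (ψ ((p.1 : ℂ) + (p.2 : ℂ) * Complex.I))‖)
        (K ×ˢ (Set.univ : Set ℝ))) :=
  integral_pullback_finite_general α β hα hβ F hF C a b hC ha hb hbound ψ hψinv hψmaps
end
end
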